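/- arXiv:1304.1451 — 3 statements merged into one kernel-verified Lean document; each statement's English description precedes it below -/
import Mathlib

section
/- Let 1<p<∞ and let μ be a positive finite Borel measure on the closed unit disk. If there exists C₂>0 such that ∫_{closed 𝔻} |K_λ|^p dμ ≥ C₂ for every λ in the open unit disk, then there exists C₃>0 such that μ(S_I) ≥ C₃·|I| for every arc I of the unit circle. -/
open MeasureTheory Complex Set Metric

noncomputable section

/-- The `p`-th power mean of `f` on the circle of radius `r` (normalized by `2π`). -/
def hIntegral (p : ℝ) (f : ℂ → ℂ) (r : ℝ) : ℝ :=
  (1 / (2 * Real.pi)) *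
    ∫ θ in (0:ℝ)..(2 * Real.pi), ‖f ((r : ℂ) * Complex.exp (θ * Complex.I))‖ ^ p

/-- `‖f‖_p ^ p`, the `p`-th power of the Hardy space `H^p` norm. -/
def hNormPow (p : ℝ) (f : ℂ → ℂ) : ℝ := sSup (hIntegral p f '' Ioo (0:ℝ) 1)

/-- The Hardy space `H^p` norm. -/
def hNorm (p : ℝ) (f : ℂ → ℂ) : ℝ := hNormPow p f ^ (1 / p)

/-- `f` has finite `H^p` norm. -/
def HpFinite (p : ℝ) (f : ℂ → ℂ) : Prop := BddAbove (hIntegral p f '' Ioo (0:ℝ) 1)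

/-- The `H^p` reproducing kernel `k_λ(z) = 1/(1 - conj(λ) z)`. -/
def hker (l : ℂ) : ℂ → ℂ := fun z => 1 / (1 - (starRingEnd ℂ) l * z)

/-- The normalized reproducing kernel `K_λ = k_λ / ‖k_λ‖_p`. -/
def hkerN (p : ℝ) (l : ℂ) : ℂ → ℂ := fun z => hker l z / (hNorm p (hker l) : ℂ)

/-- The arc of the unit circle starting at angle `a` of normalized length `ℓ`. -/
def cArc (a ℓ : ℝ) : Set ℂ :=
  (fun θ : ℝ => Complex.exp (θ * Complex.I)) '' Ico a (a + 2 * Real.pi * ℓ)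

/-- The modified Carleson window `S_{I,h}` over the arc of normalized length `ℓ`
starting at angle `a`, with radial depth `h`. -/
def cWindowH (a ℓ h : ℝ) : Set ℂ :=
  {z : ℂ | 1 - h ≤ ‖z‖ ∧ ‖z‖ ≤ 1 ∧ z / ((‖z‖ : ℝ) : ℂ) ∈ cArc a ℓ}

/-- The Carleson window `S_I`. -/
def cWindow (a ℓ : ℝ) : Set ℂ := cWindowH a ℓ ℓ

/-- Normalized Lebesgue (arclength over `2π`) measure on the unit circle `∂𝔻`. -/
def circM : Measure ℂ :=
  (ENNReal.ofReal (1 / (2 * Real.pi))) •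
    Measure.map (fun θ : ℝ => Complex.exp (θ * Complex.I))
      (volume.restrict (Ico (0:ℝ) (2 * Real.pi)))

end

/-!
With `λ = (1 - h) e^{iθ}`, the elementary estimate
`∫₀^{2π} |1 - ρ e^{iu}|^{-p} du ≍ (1 - ρ)^{1-p}` gives `‖k_λ‖_p^p ≳ h^{1-p}`, so the hypothesis
yields `∫ h^{p-1} |k_λ|^p dμ ≳ 1` uniformly in `h` and `θ`. Integrating over `θ` in an arc `J` of
length `πℓ` inside `I` and swapping the integrals, `∫ (∫_J h^{p-1} |k_λ(z)|^p dθ) dμ(z) ≳ ℓ`.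
The inner integral is bounded uniformly in `z` (the same estimate once more), and tends to `0`
as `h → 0` for every `z` off the closed arc `e^{iJ}`. Reverse Fatou then gives `μ(e^{iJ}) ≳ ℓ`,
and `e^{iJ} ⊆ S_I`.
-/

open scoped Real

lemma norm_ofReal_mul_exp (r θ : ℝ) : ‖(r : ℂ) * exp (θ * I)‖ = |r| := by
  rw [norm_mul, norm_exp_ofReal_mul_I, mul_one, norm_real, Real.norm_eq_abs]

lemma norm_one_sub_mul_exp_sq (ρ α : ℝ) :
    ‖1 - ρ * exp (α * I)‖ ^ 2 = (1 - ρ) ^ 2 + 4 * ρ * Real.sin (α / 2) ^ 2 := by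
  have hcos := Real.cos_two_mul (α / 2)
  rw [show 2 * (α / 2) = α by ring] at hcos
  rw [Complex.sq_norm, Complex.normSq_apply]
  simp only [sub_re, sub_im, one_re, one_im, mul_re, mul_im, ofReal_re, ofReal_im,
    exp_ofReal_mul_I_re, exp_ofReal_mul_I_im]
  linear_combination ρ ^ 2 * Real.sin_sq_add_cos_sq α - 2 * ρ * hcos
    - 4 * ρ * Real.sin_sq_add_cos_sq (α / 2)

lemma one_sub_add_abs_div_pi_le {ρ α : ℝ} (hρ : 0 ≤ ρ) (hα : |α| ≤ π) :
    1 - ρ + |α| / π ≤ 4 * ‖1 - ρ * exp (α * I)‖ := by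
  have hsin : |α| / π ≤ |Real.sin (α / 2)| := by
    have := Real.mul_abs_le_abs_sin (x := α / 2) (by rw [abs_div, abs_two]; linarith)
    rw [abs_div, abs_two] at this
    linarith [show 2 / π * (|α| / 2) = |α| / π by ring]
  have hsq := norm_one_sub_mul_exp_sq ρ α
  rw [← sq_abs (Real.sin _)] at hsq
  have hs1 : |Real.sin (α / 2)| ≤ 1 := Real.abs_sin_le_one _
  -- `‖·‖ ≥ 1 - ρ` settles `ρ ≤ 1/2`; otherwise `‖·‖² ≥ (1 - ρ)² + 2 sin² ≥ (1 - ρ + |sin|)² / 2`.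
  nlinarith [abs_nonneg (Real.sin (α / 2)), norm_nonneg (1 - ρ * exp (α * I)),
    sq_nonneg (‖1 - ρ * exp (α * I)‖ - (1 - ρ)), sq_nonneg (1 - ρ - |Real.sin (α / 2)|),
    sq_nonneg (4 * ‖1 - ρ * exp (α * I)‖ - (1 - ρ + |Real.sin (α / 2)|))]

lemma one_sub_abs_le_norm_one_sub_mul_exp (ρ u : ℝ) : 1 - |ρ| ≤ ‖1 - ρ * exp (u * I)‖ := by
  have := norm_sub_norm_le (1 : ℂ) (ρ * exp (u * I))
  rwa [norm_one, norm_ofReal_mul_exp] at this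

lemma norm_one_sub_mul_exp_le {ρ : ℝ} (hρ0 : 0 ≤ ρ) (hρ1 : ρ ≤ 1) (u : ℝ) :
    ‖1 - ρ * exp (u * I)‖ ≤ 1 - ρ + |u| := by
  have hexp : ‖exp (u * I) - 1‖ ≤ |u| := by
    simpa [mul_comm] using Real.norm_exp_I_mul_ofReal_sub_one_le (x := u)
  calc ‖1 - ρ * exp (u * I)‖ = ‖((1 - ρ : ℝ) : ℂ) - ρ * (exp (u * I) - 1)‖ := by
        push_cast; ring_nf
    _ ≤ ‖((1 - ρ : ℝ) : ℂ)‖ + ‖(ρ : ℂ)‖ * ‖exp (u * I) - 1‖ :=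
        (norm_sub_le _ _).trans_eq (by rw [norm_mul])
    _ ≤ 1 - ρ + 1 * |u| := by
      rw [norm_real, norm_real, Real.norm_of_nonneg (by linarith), Real.norm_of_nonneg hρ0]
      gcongr
    _ = 1 - ρ + |u| := by ring

lemma norm_one_sub_mul_exp_inv_rpow_le {p ρ u : ℝ} (hp : 0 ≤ p) (hρ0 : 0 ≤ ρ) (hρ1 : ρ < 1)
    (hu : |u| ≤ π) : ‖1 - ρ * exp (u * I)‖⁻¹ ^ p ≤ 4 ^ p * (1 - ρ + |u| / π) ^ (-p) := by
  have hA : 0 < 1 - ρ + |u| / π := by have := abs_nonneg u; positivity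
  calc ‖1 - ρ * exp (u * I)‖⁻¹ ^ p ≤ ((1 - ρ + |u| / π) / 4)⁻¹ ^ p := by
        gcongr
        linarith [one_sub_add_abs_div_pi_le hρ0 hu]
    _ = 4 ^ p * (1 - ρ + |u| / π) ^ (-p) := by
        rw [inv_div, Real.div_rpow (by norm_num) hA.le, Real.rpow_neg hA.le, div_eq_mul_inv]

lemma periodic_exp_ofReal_mul_I : Function.Periodic (fun u : ℝ => exp (u * I)) (2 * π) := by
  intro u
  simp only [ofReal_add, ofReal_mul, ofReal_ofNat, add_mul, exp_add, exp_two_pi_mul_I, mul_one]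

lemma periodic_norm_one_sub_mul_exp_inv_rpow (p ρ : ℝ) :
    Function.Periodic (fun u : ℝ => ‖1 - ρ * exp (u * I)‖⁻¹ ^ p) (2 * π) :=
  periodic_exp_ofReal_mul_I.comp fun w => ‖1 - ρ * w‖⁻¹ ^ p

lemma continuous_norm_one_sub_mul_exp_inv_rpow (p : ℝ) {ρ : ℝ} (hρ : |ρ| < 1) :
    Continuous (fun u : ℝ => ‖1 - ρ * exp (u * I)‖⁻¹ ^ p) := by
  have hpos (u : ℝ) : 0 < ‖1 - ρ * exp (u * I)‖ :=
    (sub_pos.mpr hρ).trans_le (one_sub_abs_le_norm_one_sub_mul_exp ρ u)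
  exact (Continuous.inv₀ (by fun_prop) fun u => (hpos u).ne').rpow_const
    fun u => Or.inl (inv_pos.mpr (hpos u)).ne'

lemma integral_add_abs_div_pi_rpow_neg_le {a p : ℝ} (ha : 0 < a) (hp : 1 < p) :
    ∫ u in -π..π, (a + |u| / π) ^ (-p) ≤ 2 * π * a ^ (1 - p) / (p - 1) := by
  set F : ℝ → ℝ := fun u => (a + |u| / π) ^ (-p)
  have hF : Continuous F :=
    (by fun_prop : Continuous fun u : ℝ => a + |u| / π).rpow_const
      fun u => Or.inl (by positivity)
  have hhalf : ∫ u in (0 : ℝ)..π, F u ≤ π * a ^ (1 - p) / (p - 1) := by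
    calc ∫ u in (0 : ℝ)..π, F u
        = ∫ u in (0 : ℝ)..π, (fun v => (a + v) ^ (-p)) (u / π) :=
          intervalIntegral.integral_congr fun u hu => by
            rw [uIcc_of_le Real.pi_pos.le] at hu
            simp only [F, abs_of_nonneg hu.1]
      _ = π * ((a + 1) ^ (1 - p) - a ^ (1 - p)) / (1 - p) := by
          rw [intervalIntegral.integral_comp_div (fun v => (a + v) ^ (-p)) Real.pi_ne_zero,
            zero_div, div_self Real.pi_ne_zero,
            intervalIntegral.integral_comp_add_left (fun v => v ^ (-p)), add_zero,
            integral_rpow (Or.inr ⟨by linarith, by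
              rw [uIcc_of_le (by linarith)]; exact fun h => (h.1.trans_lt' ha).false⟩),
            smul_eq_mul, show -p + 1 = 1 - p by ring, mul_div_assoc]
      _ = π * (a ^ (1 - p) - (a + 1) ^ (1 - p)) / (p - 1) := by
          rw [← neg_sub p 1, div_neg, ← neg_div, ← mul_neg, neg_sub]
      _ ≤ π * a ^ (1 - p) / (p - 1) := by
          gcongr
          exact sub_le_self _ (by positivity)
  have heven : ∫ u in -π..0, F u = ∫ u in (0 : ℝ)..π, F u := by
    simpa [F] using (intervalIntegral.integral_comp_neg (a := 0) (b := π) F).symm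
  rw [← intervalIntegral.integral_add_adjacent_intervals (hF.intervalIntegrable _ 0)
    (hF.intervalIntegrable 0 _), heven, ← two_mul, mul_assoc, mul_div_assoc]
  exact mul_le_mul_of_nonneg_left hhalf two_pos.le

lemma integral_norm_one_sub_mul_exp_inv_rpow_le {p ρ : ℝ} (hp : 1 < p) (hρ0 : 0 ≤ ρ)
    (hρ1 : ρ < 1) :
    ∫ u in 0..2 * π, ‖1 - ρ * exp (u * I)‖⁻¹ ^ p ≤ 2 * π * 4 ^ p * (1 - ρ) ^ (1 - p) / (p - 1) := by
  have hρ : |ρ| < 1 := by rwa [abs_of_nonneg hρ0]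
  have hcont : Continuous fun u : ℝ => (1 - ρ + |u| / π) ^ (-p) :=
    (by fun_prop : Continuous fun u : ℝ => 1 - ρ + |u| / π).rpow_const
      fun u => Or.inl (by have := abs_nonneg u; positivity)
  calc ∫ u in 0..2 * π, ‖1 - ρ * exp (u * I)‖⁻¹ ^ p
      = ∫ u in -π..-π + 2 * π, ‖1 - ρ * exp (u * I)‖⁻¹ ^ p := by
        simpa using (periodic_norm_one_sub_mul_exp_inv_rpow p ρ).intervalIntegral_add_eq 0 (-π)
    _ ≤ ∫ u in -π..π, 4 ^ p * (1 - ρ + |u| / π) ^ (-p) := by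
        rw [show -π + 2 * π = π by ring]
        refine intervalIntegral.integral_mono_on (by linarith [Real.pi_pos])
          ((continuous_norm_one_sub_mul_exp_inv_rpow p hρ).intervalIntegrable _ _)
          ((hcont.const_mul _).intervalIntegrable _ _) fun u hu => ?_
        exact norm_one_sub_mul_exp_inv_rpow_le (by linarith) hρ0 hρ1 (abs_le.mpr hu)
    _ ≤ 4 ^ p * (2 * π * (1 - ρ) ^ (1 - p) / (p - 1)) := by
        rw [intervalIntegral.integral_const_mul]
        gcongr
        exact integral_add_abs_div_pi_rpow_neg_le (by linarith) hp
    _ = 2 * π * 4 ^ p * (1 - ρ) ^ (1 - p) / (p - 1) := by ring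

lemma le_integral_norm_one_sub_mul_exp_inv_rpow {p ρ : ℝ} (hp : 0 ≤ p) (hρ0 : 0 ≤ ρ)
    (hρ1 : ρ < 1) :
    (1 - ρ) ^ (1 - p) / 2 ^ p ≤ ∫ u in 0..2 * π, ‖1 - ρ * exp (u * I)‖⁻¹ ^ p := by
  have ha : 0 < 1 - ρ := by linarith
  have hρ : |ρ| < 1 := by rwa [abs_of_nonneg hρ0]
  have hcont := continuous_norm_one_sub_mul_exp_inv_rpow p hρ
  calc (1 - ρ) ^ (1 - p) / 2 ^ p = ∫ _ in 0..1 - ρ, (2 * (1 - ρ))⁻¹ ^ p := by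
        rw [intervalIntegral.integral_const, smul_eq_mul, sub_zero, Real.inv_rpow (by positivity),
          Real.mul_rpow zero_le_two ha.le, Real.rpow_sub ha, Real.rpow_one]
        field_simp
    _ ≤ ∫ u in 0..1 - ρ, ‖1 - ρ * exp (u * I)‖⁻¹ ^ p := by
        refine intervalIntegral.integral_mono_on ha.le intervalIntegrable_const
          (hcont.intervalIntegrable _ _) fun u hu => ?_
        have hnorm := norm_one_sub_mul_exp_le hρ0 hρ1.le u
        rw [abs_of_nonneg hu.1] at hnorm
        have hpos : 0 < ‖1 - ρ * exp (u * I)‖ :=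
          (sub_pos.mpr hρ).trans_le (one_sub_abs_le_norm_one_sub_mul_exp ρ u)
        gcongr
        linarith [hu.2]
    _ ≤ ∫ u in 0..2 * π, ‖1 - ρ * exp (u * I)‖⁻¹ ^ p :=
        intervalIntegral.integral_mono_interval le_rfl ha.le (by linarith [Real.pi_gt_three])
          (Filter.Eventually.of_forall fun u => by positivity) (hcont.intervalIntegrable _ _)

lemma norm_exp_sub_mul_exp (θ r φ : ℝ) :
    ‖exp (θ * I) - r * exp (φ * I)‖ = ‖1 - r * exp (↑(φ - θ) * I)‖ := by
  have hfac : exp (θ * I) - r * exp (φ * I) = exp (θ * I) * (1 - r * exp (↑(φ - θ) * I)) := by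
    rw [mul_sub, mul_one, mul_left_comm, ← exp_add]
    push_cast; ring_nf
  rw [hfac, norm_mul, norm_exp_ofReal_mul_I, one_mul]

lemma norm_hker_ofReal_mul_exp (r θ : ℝ) (z : ℂ) :
    ‖hker (r * exp (θ * I)) z‖ = ‖exp (θ * I) - r * z‖⁻¹ := by
  have hconj : (starRingEnd ℂ) (r * exp (θ * I)) = r * exp (↑(-θ) * I) := by
    rw [map_mul, conj_ofReal, ← exp_conj, map_mul, conj_ofReal, conj_I]
    push_cast; ring_nf
  have hfac : 1 - (starRingEnd ℂ) (r * exp (θ * I)) * z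
      = exp (↑(-θ) * I) * (exp (θ * I) - r * z) := by
    rw [hconj, mul_sub, ← mul_assoc, ← exp_add,
      show ↑(-θ) * I + θ * I = 0 by push_cast; ring, exp_zero]
    ring
  rw [hker, norm_div, norm_one, one_div, hfac, norm_mul, norm_exp_ofReal_mul_I, one_mul]

lemma norm_hker_le {l w : ℂ} (hl : ‖l‖ < 1) (hw : ‖w‖ ≤ 1) : ‖hker l w‖ ≤ (1 - ‖l‖)⁻¹ := by
  have hlow : 1 - ‖l‖ ≤ ‖1 - (starRingEnd ℂ) l * w‖ := by
    have := norm_sub_norm_le (1 : ℂ) ((starRingEnd ℂ) l * w)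
    rw [norm_one, norm_mul, Complex.norm_conj] at this
    nlinarith [norm_nonneg l]
  rw [hker, norm_div, norm_one, one_div]
  exact inv_anti₀ (by linarith) hlow

lemma hpFinite_hker {p : ℝ} (hp : 0 ≤ p) {l : ℂ} (hl : ‖l‖ < 1) : HpFinite p (hker l) := by
  refine ⟨(1 - ‖l‖)⁻¹ ^ p, ?_⟩
  rintro _ ⟨r, hr, rfl⟩
  have hbound : ∀ θ ∈ uIoc 0 (2 * π), ‖‖hker l (r * exp (θ * I))‖ ^ p‖ ≤ (1 - ‖l‖)⁻¹ ^ p := by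
    intro θ _
    have hw : ‖(r : ℂ) * exp (θ * I)‖ ≤ 1 := by
      rw [norm_ofReal_mul_exp, abs_of_pos hr.1]
      exact hr.2.le
    rw [Real.norm_of_nonneg (by positivity)]
    gcongr
    exact norm_hker_le hl hw
  have hint := (le_abs_self _).trans (intervalIntegral.norm_integral_le_of_norm_le_const hbound)
  rw [sub_zero, abs_of_pos Real.two_pi_pos] at hint
  rw [hIntegral]
  calc 1 / (2 * π) * ∫ θ in (0 : ℝ)..2 * π, ‖hker l (r * exp (θ * I))‖ ^ p
      ≤ 1 / (2 * π) * ((1 - ‖l‖)⁻¹ ^ p * (2 * π)) := by gcongr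
    _ = (1 - ‖l‖)⁻¹ ^ p := by field_simp

lemma hIntegral_hker_ofReal_mul_exp (p r t : ℝ) :
    hIntegral p (hker (r * exp (t * I))) r
      = 1 / (2 * π) * ∫ u in 0..2 * π, ‖1 - (r ^ 2 : ℝ) * exp (u * I)‖⁻¹ ^ p := by
  have hrot (θ : ℝ) : ‖hker (r * exp (t * I)) (r * exp (θ * I))‖ ^ p
      = ‖1 - (r ^ 2 : ℝ) * exp (↑(θ - t) * I)‖⁻¹ ^ p := by
    rw [norm_hker_ofReal_mul_exp, ← mul_assoc, ← ofReal_mul, ← sq, norm_exp_sub_mul_exp]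
  rw [hIntegral]
  congr 1
  simp only [hrot]
  rw [intervalIntegral.integral_comp_sub_right (fun u => ‖1 - (r ^ 2 : ℝ) * exp (u * I)‖⁻¹ ^ p),
    zero_sub, show 2 * π - t = -t + 2 * π by ring,
    (periodic_norm_one_sub_mul_exp_inv_rpow p _).intervalIntegral_add_eq (-t) 0, zero_add]

lemma hNormPow_hker_ge {p h : ℝ} (hp : 1 ≤ p) (hh0 : 0 < h) (hh1 : h < 1) (t : ℝ) :
    h ^ (1 - p) / (π * 4 ^ p) ≤ hNormPow p (hker ((1 - h : ℝ) * exp (t * I))) := by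
  have hρ0 : 0 ≤ (1 - h) ^ 2 := sq_nonneg _
  have hρ1 : (1 - h) ^ 2 < 1 := by nlinarith
  have hmean := le_integral_norm_one_sub_mul_exp_inv_rpow (p := p) (by linarith) hρ0 hρ1
  have hgap : (2 * h) ^ (1 - p) ≤ (1 - (1 - h) ^ 2) ^ (1 - p) :=
    Real.rpow_le_rpow_of_nonpos (by nlinarith) (by nlinarith) (by linarith)
  have hl : ‖((1 - h : ℝ) : ℂ) * exp (t * I)‖ < 1 := by
    rw [norm_ofReal_mul_exp, abs_of_pos (by linarith)]
    linarith
  have hsup : hIntegral p (hker ((1 - h : ℝ) * exp (t * I))) (1 - h)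
      ≤ hNormPow p (hker ((1 - h : ℝ) * exp (t * I))) :=
    le_csSup (hpFinite_hker (by linarith) hl) ⟨1 - h, ⟨by linarith, by linarith⟩, rfl⟩
  refine le_trans ?_ hsup
  rw [hIntegral_hker_ofReal_mul_exp]
  calc h ^ (1 - p) / (π * 4 ^ p) = 1 / (2 * π) * ((2 * h) ^ (1 - p) / 2 ^ p) := by
        rw [Real.mul_rpow zero_le_two hh0.le, Real.rpow_sub zero_lt_two, Real.rpow_one,
          show (4 : ℝ) = 2 * 2 by norm_num, Real.mul_rpow zero_le_two zero_le_two]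
        field_simp
    _ ≤ 1 / (2 * π) * ∫ u in 0..2 * π, ‖1 - ((1 - h) ^ 2 : ℝ) * exp (u * I)‖⁻¹ ^ p := by
        gcongr
        exact (div_le_div_of_nonneg_right hgap (by positivity)).trans hmean

lemma norm_hkerN_rpow {p : ℝ} (hp : 0 < p) {l : ℂ} (hN : 0 < hNormPow p (hker l)) (z : ℂ) :
    ‖hkerN p l z‖ ^ p = ‖hker l z‖ ^ p / hNormPow p (hker l) := by
  have hnorm : 0 < hNorm p (hker l) := Real.rpow_pos_of_pos hN _
  rw [hkerN, norm_div, norm_real, Real.norm_of_nonneg hnorm.le,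
    Real.div_rpow (norm_nonneg _) hnorm.le, hNorm, ← Real.rpow_mul hN.le,
    one_div_mul_cancel hp.ne', Real.rpow_one]

noncomputable def kernelWeight (p h θ : ℝ) (z : ℂ) : ℝ :=
  h ^ (p - 1) * ‖exp (θ * I) - (1 - h : ℝ) * z‖⁻¹ ^ p

lemma kernelWeight_eq (p h θ : ℝ) (z : ℂ) :
    kernelWeight p h θ z = h ^ (p - 1) * ‖hker ((1 - h : ℝ) * exp (θ * I)) z‖ ^ p := by
  rw [kernelWeight, norm_hker_ofReal_mul_exp]

lemma ofReal_le_lintegral_kernelWeight {p C₂ : ℝ} (hp : 1 < p) {μ : Measure ℂ}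
    (hK : ∀ l ∈ ball (0 : ℂ) 1, ENNReal.ofReal C₂ ≤ ∫⁻ z, ENNReal.ofReal (‖hkerN p l z‖ ^ p) ∂μ)
    {h : ℝ} (hh0 : 0 < h) (hh1 : h < 1) (θ : ℝ) :
    ENNReal.ofReal (C₂ / (π * 4 ^ p)) ≤ ∫⁻ z, ENNReal.ofReal (kernelWeight p h θ z) ∂μ := by
  set l : ℂ := (1 - h : ℝ) * exp (θ * I)
  set c : ℝ := (π * 4 ^ p)⁻¹
  have hc : 0 < c := by positivity
  have hN : h ^ (1 - p) * c ≤ hNormPow p (hker l) := by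
    simpa only [div_eq_mul_inv] using hNormPow_hker_ge hp.le hh0 hh1 θ
  have hNpos : 0 < hNormPow p (hker l) := lt_of_lt_of_le (by positivity) hN
  have hl : l ∈ ball (0 : ℂ) 1 := by
    rw [mem_ball_zero_iff, norm_ofReal_mul_exp, abs_of_pos (by linarith)]
    linarith
  have hcN : c ≤ h ^ (p - 1) * hNormPow p (hker l) := by
    calc c = h ^ (p - 1) * (h ^ (1 - p) * c) := by
          rw [← mul_assoc, ← Real.rpow_add hh0, show p - 1 + (1 - p) = 0 by ring,
            Real.rpow_zero, one_mul]
      _ ≤ h ^ (p - 1) * hNormPow p (hker l) := by gcongr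
  have hpt (z : ℂ) : ENNReal.ofReal c * ENNReal.ofReal (‖hkerN p l z‖ ^ p)
      ≤ ENNReal.ofReal (kernelWeight p h θ z) := by
    rw [← ENNReal.ofReal_mul hc.le, norm_hkerN_rpow (by linarith) hNpos, kernelWeight_eq]
    refine ENNReal.ofReal_le_ofReal ?_
    calc c * (‖hker l z‖ ^ p / hNormPow p (hker l))
        ≤ h ^ (p - 1) * hNormPow p (hker l) * (‖hker l z‖ ^ p / hNormPow p (hker l)) := by gcongr
      _ = h ^ (p - 1) * ‖hker l z‖ ^ p := by field_simp
  calc ENNReal.ofReal (C₂ / (π * 4 ^ p)) = ENNReal.ofReal c * ENNReal.ofReal C₂ := by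
        rw [← ENNReal.ofReal_mul hc.le, div_eq_inv_mul]
    _ ≤ ENNReal.ofReal c * ∫⁻ z, ENNReal.ofReal (‖hkerN p l z‖ ^ p) ∂μ := by gcongr; exact hK l hl
    _ = ∫⁻ z, ENNReal.ofReal c * ENNReal.ofReal (‖hkerN p l z‖ ^ p) ∂μ :=
        (lintegral_const_mul' _ _ ENNReal.ofReal_ne_top).symm
    _ ≤ ∫⁻ z, ENNReal.ofReal (kernelWeight p h θ z) ∂μ := lintegral_mono hpt

lemma kernelWeight_eq_rotate (p h θ : ℝ) (z : ℂ) :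
    kernelWeight p h θ z = h ^ (p - 1) *
      ‖1 - ‖(1 - h : ℝ) * z‖ * exp (↑(arg ((1 - h : ℝ) * z) - θ) * I)‖⁻¹ ^ p := by
  rw [kernelWeight, ← norm_exp_sub_mul_exp, norm_mul_exp_arg_mul_I]

lemma norm_ofReal_one_sub_mul_le {h : ℝ} (hh1 : h ≤ 1) {z : ℂ} (hz : ‖z‖ ≤ 1) :
    ‖(1 - h : ℝ) * z‖ ≤ 1 - h := by
  rw [norm_mul, norm_real, Real.norm_of_nonneg (by linarith)]
  nlinarith

lemma continuous_kernelWeight (p : ℝ) {h : ℝ} (hh0 : 0 < h) (hh1 : h ≤ 1) {z : ℂ}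
    (hz : ‖z‖ ≤ 1) : Continuous fun θ => kernelWeight p h θ z := by
  have hρ : |‖(1 - h : ℝ) * z‖| < 1 := by
    rw [abs_norm]; linarith [norm_ofReal_one_sub_mul_le hh1 hz]
  simp only [kernelWeight_eq_rotate]
  exact ((continuous_norm_one_sub_mul_exp_inv_rpow p hρ).comp
    (continuous_const.sub continuous_id)).const_mul _

lemma integral_kernelWeight_le {p h : ℝ} (hp : 1 < p) (hh0 : 0 < h) (hh1 : h ≤ 1) {z : ℂ}
    (hz : ‖z‖ ≤ 1) (c : ℝ) :
    ∫ θ in c..c + 2 * π, kernelWeight p h θ z ≤ 2 * π * 4 ^ p / (p - 1) := by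
  set w : ℂ := (1 - h : ℝ) * z
  have hρ : ‖w‖ ≤ 1 - h := norm_ofReal_one_sub_mul_le hh1 hz
  have hmean := integral_norm_one_sub_mul_exp_inv_rpow_le hp (norm_nonneg w) (by linarith)
  simp only [kernelWeight_eq_rotate]
  rw [intervalIntegral.integral_const_mul,
    intervalIntegral.integral_comp_sub_left (fun u => ‖1 - ‖w‖ * exp (u * I)‖⁻¹ ^ p),
    show arg w - c = arg w - (c + 2 * π) + 2 * π by ring,
    (periodic_norm_one_sub_mul_exp_inv_rpow p _).intervalIntegral_add_eq _ 0, zero_add]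
  calc h ^ (p - 1) * ∫ u in 0..2 * π, ‖1 - ‖w‖ * exp (u * I)‖⁻¹ ^ p
      ≤ h ^ (p - 1) * (2 * π * 4 ^ p * h ^ (1 - p) / (p - 1)) := by
        refine mul_le_mul_of_nonneg_left (hmean.trans ?_) (by positivity)
        refine div_le_div_of_nonneg_right (mul_le_mul_of_nonneg_left ?_ (by positivity))
          (by linarith)
        exact Real.rpow_le_rpow_of_nonpos hh0 (by linarith) (by linarith)
    _ = 2 * π * 4 ^ p * (h ^ (p - 1) * h ^ (1 - p)) / (p - 1) := by ring
    _ = 2 * π * 4 ^ p / (p - 1) := by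
        rw [← Real.rpow_add hh0, show p - 1 + (1 - p) = 0 by ring, Real.rpow_zero, mul_one]

lemma setLIntegral_kernelWeight_le {p h : ℝ} (hp : 1 < p) (hh0 : 0 < h) (hh1 : h ≤ 1) {z : ℂ}
    (hz : ‖z‖ ≤ 1) {c L : ℝ} (hL : L ≤ 2 * π) :
    ∫⁻ θ in Icc c (c + L), ENNReal.ofReal (kernelWeight p h θ z)
      ≤ ENNReal.ofReal (2 * π * 4 ^ p / (p - 1)) := by
  have hcont := continuous_kernelWeight p hh0 hh1 hz
  have hnonneg (θ : ℝ) : 0 ≤ kernelWeight p h θ z := by rw [kernelWeight]; positivity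
  calc ∫⁻ θ in Icc c (c + L), ENNReal.ofReal (kernelWeight p h θ z)
      ≤ ∫⁻ θ in Ioc c (c + 2 * π), ENNReal.ofReal (kernelWeight p h θ z) := by
        rw [setLIntegral_congr Ioc_ae_eq_Icc]
        exact lintegral_mono_set (Icc_subset_Icc_right (by linarith))
    _ = ENNReal.ofReal (∫ θ in c..c + 2 * π, kernelWeight p h θ z) := by
        rw [intervalIntegral.integral_of_le (by linarith [Real.pi_pos]),
          ofReal_integral_eq_lintegral_ofReal (hcont.integrableOn_Icc.mono_set Ioc_subset_Icc_self)
            (Filter.Eventually.of_forall hnonneg)]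
    _ ≤ ENNReal.ofReal (2 * π * 4 ^ p / (p - 1)) :=
        ENNReal.ofReal_le_ofReal (integral_kernelWeight_le hp hh0 hh1 hz c)

def closedArc (c L : ℝ) : Set ℂ := (fun θ : ℝ => exp (θ * I)) '' Icc c (c + L)

lemma isCompact_closedArc (c L : ℝ) : IsCompact (closedArc c L) :=
  isCompact_Icc.image (by fun_prop)

open Filter Topology in
lemma tendsto_setLIntegral_kernelWeight_zero {p : ℝ} (hp : 1 < p) {z : ℂ} (hz : ‖z‖ ≤ 1)
    {c L : ℝ} (hzE : z ∉ closedArc c L) :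
    Tendsto (fun h => ∫⁻ θ in Icc c (c + L), ENNReal.ofReal (kernelWeight p h θ z))
      (𝓝[>] 0) (𝓝 0) := by
  obtain ⟨δ, hδ, hball⟩ :=
    Metric.isOpen_iff.mp (isCompact_closedArc c L).isClosed.isOpen_compl z hzE
  have hfar (θ : ℝ) (hθ : θ ∈ Icc c (c + L)) : δ ≤ ‖exp (θ * I) - z‖ := by
    by_contra hlt
    exact hball (mem_ball_iff_norm.mpr (not_le.mp hlt)) ⟨θ, hθ, rfl⟩
  have hbound : ∀ᶠ h in 𝓝[>] 0,
      ∫⁻ θ in Icc c (c + L), ENNReal.ofReal (kernelWeight p h θ z)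
        ≤ ENNReal.ofReal (h ^ (p - 1) * (δ / 2)⁻¹ ^ p) * volume (Icc c (c + L)) := by
    filter_upwards [Ioo_mem_nhdsGT (half_pos hδ)] with h hh
    rw [← setLIntegral_const]
    refine setLIntegral_mono measurable_const fun θ hθ => ENNReal.ofReal_le_ofReal ?_
    have hshift : ‖exp (θ * I) - z‖ ≤ ‖exp (θ * I) - (1 - h : ℝ) * z‖ + h := by
      calc ‖exp (θ * I) - z‖ = ‖(exp (θ * I) - (1 - h : ℝ) * z) - h * z‖ := by
            push_cast; ring_nf
        _ ≤ ‖exp (θ * I) - (1 - h : ℝ) * z‖ + ‖(h : ℂ) * z‖ := norm_sub_le _ _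
        _ ≤ ‖exp (θ * I) - (1 - h : ℝ) * z‖ + h := by
            rw [norm_mul, norm_real, Real.norm_of_nonneg hh.1.le]
            nlinarith [hh.1]
    rw [kernelWeight]
    refine mul_le_mul_of_nonneg_left ?_ (Real.rpow_nonneg hh.1.le _)
    gcongr
    linarith [hfar θ hθ, hh.2]
  have hlim : Tendsto (fun h : ℝ => ENNReal.ofReal (h ^ (p - 1) * (δ / 2)⁻¹ ^ p)
      * volume (Icc c (c + L))) (𝓝[>] 0) (𝓝 0) := by
    have hpow : Tendsto (fun h : ℝ => h ^ (p - 1) * (δ / 2)⁻¹ ^ p) (𝓝[>] 0) (𝓝 0) := by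
      have := ((Real.continuousAt_rpow_const 0 (p - 1) (Or.inr (by linarith))).tendsto.mono_left
        (nhdsWithin_le_nhds (s := Ioi 0))).mul_const ((δ / 2)⁻¹ ^ p)
      rwa [Real.zero_rpow (by linarith), zero_mul] at this
    have := ENNReal.Tendsto.mul_const (ENNReal.tendsto_ofReal hpow)
      (Or.inr (measure_Icc_lt_top (μ := volume) (a := c) (b := c + L)).ne)
    rwa [ENNReal.ofReal_zero, zero_mul] at this
  exact tendsto_of_tendsto_of_tendsto_of_le_of_le' tendsto_const_nhds hlim
    (Eventually.of_forall fun _ => zero_le) hbound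

open Filter Topology in
lemma limsup_setLIntegral_kernelWeight_le_indicator {p : ℝ} (hp : 1 < p) {hs : ℕ → ℝ}
    (hs01 : ∀ n, hs n ∈ Ioo 0 1) (hslim : Tendsto hs atTop (𝓝[>] 0)) {z : ℂ} (hz : ‖z‖ ≤ 1)
    {c L : ℝ} (hL : L ≤ 2 * π) :
    limsup (fun n => ∫⁻ θ in Icc c (c + L), ENNReal.ofReal (kernelWeight p (hs n) θ z)) atTop
      ≤ (closedArc c L).indicator (fun _ => ENNReal.ofReal (2 * π * 4 ^ p / (p - 1))) z := by
  by_cases hzE : z ∈ closedArc c L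
  · rw [indicator_of_mem hzE]
    exact limsup_le_of_le (by isBoundedDefault) (Eventually.of_forall fun n =>
      setLIntegral_kernelWeight_le hp (hs01 n).1 (hs01 n).2.le hz hL)
  · rw [indicator_of_notMem hzE]
    exact ((tendsto_setLIntegral_kernelWeight_zero hp hz hzE).comp hslim).limsup_eq.le

open Filter Topology in
lemma le_measure_closedArc {p c₁ : ℝ} (hp : 1 < p) {μ : Measure ℂ} [IsFiniteMeasure μ]
    (hsupp : ∀ᵐ z ∂μ, ‖z‖ ≤ 1)
    (hlow : ∀ h ∈ Ioo (0 : ℝ) 1, ∀ θ,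
      ENNReal.ofReal c₁ ≤ ∫⁻ z, ENNReal.ofReal (kernelWeight p h θ z) ∂μ)
    {c L : ℝ} (hL0 : 0 ≤ L) (hL : L ≤ 2 * π) :
    ENNReal.ofReal (c₁ * L) ≤ ENNReal.ofReal (2 * π * 4 ^ p / (p - 1)) * μ (closedArc c L) := by
  set D := 2 * π * 4 ^ p / (p - 1)
  obtain ⟨hs, -, hs01, hslim⟩ := exists_seq_strictAnti_tendsto' (zero_lt_one' ℝ)
  have hsGT : Tendsto hs atTop (𝓝[>] 0) :=
    tendsto_nhdsWithin_iff.mpr ⟨hslim, Eventually.of_forall fun n => (hs01 n).1⟩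
  set f : ℕ → ℂ → ENNReal := fun n z =>
    ∫⁻ θ in Icc c (c + L), ENNReal.ofReal (kernelWeight p (hs n) θ z)
  have hmeas (n : ℕ) : Measurable (Function.uncurry fun z θ =>
      ENNReal.ofReal (kernelWeight p (hs n) θ z)) := by
    unfold kernelWeight; fun_prop
  have hlower (n : ℕ) : ENNReal.ofReal (c₁ * L) ≤ ∫⁻ z, f n z ∂μ := by
    calc ENNReal.ofReal (c₁ * L) = ∫⁻ θ in Icc c (c + L), ENNReal.ofReal c₁ := by
          rw [setLIntegral_const, Real.volume_Icc, add_sub_cancel_left, ENNReal.ofReal_mul' hL0]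
      _ ≤ ∫⁻ θ in Icc c (c + L), ∫⁻ z, ENNReal.ofReal (kernelWeight p (hs n) θ z) ∂μ :=
          lintegral_mono fun θ => hlow _ (hs01 n) θ
      _ = ∫⁻ z, f n z ∂μ := (lintegral_lintegral_swap (hmeas n).aemeasurable).symm
  have hbound (n : ℕ) : f n ≤ᵐ[μ] fun _ => ENNReal.ofReal D := by
    filter_upwards [hsupp] with z hz
    exact setLIntegral_kernelWeight_le hp (hs01 n).1 (hs01 n).2.le hz hL
  have hlimsup : ∀ᵐ z ∂μ,
      limsup (fun n => f n z) atTop ≤ (closedArc c L).indicator (fun _ => ENNReal.ofReal D) z := by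
    filter_upwards [hsupp] with z hz
    exact limsup_setLIntegral_kernelWeight_le_indicator hp hs01 hsGT hz hL
  calc ENNReal.ofReal (c₁ * L) ≤ limsup (fun n => ∫⁻ z, f n z ∂μ) atTop :=
        le_limsup_of_frequently_le (Frequently.of_forall hlower) (by isBoundedDefault)
    _ ≤ ∫⁻ z, limsup (fun n => f n z) atTop ∂μ :=
        limsup_lintegral_le _ (fun n => (hmeas n).lintegral_prod_right) hbound
          (by rw [lintegral_const]
              exact ENNReal.mul_ne_top ENNReal.ofReal_ne_top (measure_ne_top _ _))
    _ ≤ ∫⁻ z, (closedArc c L).indicator (fun _ => ENNReal.ofReal D) z ∂μ :=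
        lintegral_mono_ae hlimsup
    _ = ENNReal.ofReal D * μ (closedArc c L) :=
        lintegral_indicator_const (isCompact_closedArc c L).isClosed.measurableSet _

lemma closedArc_subset_cWindow (a : ℝ) {ℓ : ℝ} (hℓ : 0 < ℓ) :
    closedArc a (π * ℓ) ⊆ cWindow a ℓ := by
  rintro _ ⟨θ, hθ, rfl⟩
  refine ⟨by rw [norm_exp_ofReal_mul_I]; linarith, (norm_exp_ofReal_mul_I θ).le, ?_⟩
  rw [norm_exp_ofReal_mul_I, ofReal_one, div_one]
  exact ⟨θ, ⟨hθ.1, by nlinarith [hθ.2, Real.pi_pos]⟩, rfl⟩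

/-- (2) ⟹ (3): if the reverse inequality holds on all normalized reproducing kernels
`K_λ`, then `μ(S_I) ≳ |I|` for every arc `I` of the unit circle. -/
theorem kernel_lower_bound_implies_window_bound (p : ℝ) (hp : 1 < p)
    (μ : Measure ℂ) [IsFiniteMeasure μ] (hsupp : μ (closedBall (0:ℂ) 1)ᶜ = 0)
    (C₂ : ℝ) (hC₂ : 0 < C₂)
    (hker : ∀ l ∈ ball (0:ℂ) 1,
      ENNReal.ofReal C₂ ≤ ∫⁻ z, ENNReal.ofReal (‖hkerN p l z‖ ^ p) ∂μ) :
    ∃ C₃ > (0:ℝ), ∀ a ℓ : ℝ, 0 < ℓ → ℓ ≤ 1 →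
      ENNReal.ofReal (C₃ * ℓ) ≤ μ (cWindow a ℓ) := by
  have hsupp' : ∀ᵐ z ∂μ, ‖z‖ ≤ 1 := by
    filter_upwards [mem_ae_iff.mpr hsupp] with z hz using mem_closedBall_zero_iff.mp hz
  have hlow (h : ℝ) (hh : h ∈ Ioo (0 : ℝ) 1) (θ : ℝ) :=
    ofReal_le_lintegral_kernelWeight hp hker hh.1 hh.2 θ
  set D := 2 * π * 4 ^ p / (p - 1)
  have hD : 0 < D := div_pos (by positivity) (by linarith)
  refine ⟨C₂ / (π * 4 ^ p) * π / D, by positivity, fun a ℓ hℓ0 hℓ1 => ?_⟩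
  have hwindow := le_measure_closedArc hp hsupp' hlow (c := a) (L := π * ℓ)
    (by positivity) (by nlinarith [Real.pi_pos])
  calc ENNReal.ofReal (C₂ / (π * 4 ^ p) * π / D * ℓ)
      = ENNReal.ofReal (C₂ / (π * 4 ^ p) * (π * ℓ)) / ENNReal.ofReal D := by
        rw [← ENNReal.ofReal_div_of_pos hD]; ring_nf
    _ ≤ μ (closedArc a (π * ℓ)) := ENNReal.div_le_of_le_mul' hwindow
    _ ≤ μ (cWindow a ℓ) := measure_mono (closedArc_subset_cWindow a hℓ0)
end

section
/- There exist constants c,C>0 such that for every λ ∈ ℂ, c·e^{2π|Im λ|}/(1+|Im λ|) ≤ ∫_ℝ |sin(π(x−λ))/(π(x−λ))|² dx ≤ C·e^{2π|Im λ|}/(1+|Im λ|). Equivalently, the normalization constant c_λ of the Paley–Wiener reproducing kernel K_λ(z) = c_λ·sin(π(z−λ))/(π(z−λ)) satisfies c_λ² ≍ (1+|Im λ|)e^{−2π|Im λ|}. -/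
open MeasureTheory Complex Set

noncomputable section

/-- The normalized cardinal sine `sinc(w) = sin(πw)/(πw)` (with value `1` at `w = 0`). -/
def pwSinc (w : ℂ) : ℂ :=
  if w = 0 then 1 else Complex.sin (Real.pi * w) / (Real.pi * w)

/-- Membership in the Paley–Wiener space `PW_π`: `F` is the Fourier transform of a
function `g ∈ L²([-π, π])`. -/
def memPW (F : ℂ → ℂ) : Prop :=
  ∃ g : ℝ → ℂ, MemLp g 2 (volume.restrict (Icc (-Real.pi) Real.pi)) ∧
    ∀ z : ℂ, F z = ∫ t in Icc (-Real.pi) Real.pi, g t * Complex.exp (Complex.I * z * t)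

/-- `∫_ℝ |sin(π(x-λ))/(π(x-λ))|² dx`, the squared `L²(ℝ)` norm of the (unnormalized)
Paley–Wiener reproducing kernel at `λ`. -/
def sincNormSq (l : ℂ) : ℝ := ∫ x : ℝ, ‖pwSinc ((x : ℂ) - l)‖ ^ 2

/-- The normalization constant `c_λ` of the Paley–Wiener reproducing kernel. -/
def pwC (l : ℂ) : ℝ := 1 / Real.sqrt (sincNormSq l)

/-- The sequence `x_n = n + 1/8` (`n` even), `x_n = n - 1/8` (`n` odd). -/
def xseq (n : ℤ) : ℝ := if Even n then (n : ℝ) + 1 / 8 else (n : ℝ) - 1 / 8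

end

/-! With `λ = a + ib` one has `|sin(π(x - λ))|² = sin²(π(x - a)) + sinh²(πb)`, so after a
translation
`∫ |sinc(x - λ)|² dx = ∫ sin²(πy) / (π²(y² + b²)) dy + sinh²(πb) / (π|b|)`,
the last term being a Cauchy integral. The oscillating first term lies in `[0, 2π]` and is
bounded below when `|b| ≤ 1`; the Cauchy term is at most `e^{2π|b|} / (1 + |b|)`, and comparable
to it when `|b| ≥ 1`. Inverting the two-sided bound gives the one for
`c_λ² = 1 / ∫ |sinc(x - λ)|² dx`. -/

open Real

lemma Complex.sq_norm_sin (z : ℂ) :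
    ‖Complex.sin z‖ ^ 2 = Real.sin z.re ^ 2 + Real.sinh z.im ^ 2 := by
  rw [Complex.sin_eq, Complex.sq_norm, Complex.normSq_apply]
  simp only [← Complex.ofReal_sin, ← Complex.ofReal_cos, ← Complex.ofReal_sinh,
    ← Complex.ofReal_cosh, ← Complex.ofReal_mul, Complex.add_re, Complex.add_im,
    Complex.mul_I_re, Complex.mul_I_im, Complex.ofReal_re, Complex.ofReal_im]
  nlinarith [Real.sin_sq_add_cos_sq z.re, Real.cosh_sq z.im]

lemma norm_pwSinc_sq {w : ℂ} (hw : w ≠ 0) :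
    ‖pwSinc w‖ ^ 2 =
      (Real.sin (π * w.re) ^ 2 + Real.sinh (π * w.im) ^ 2) / (π ^ 2 * ‖w‖ ^ 2) := by
  rw [pwSinc, if_neg hw, norm_div, div_pow, Complex.sq_norm_sin, norm_mul, mul_pow]
  simp [Complex.norm_real, abs_of_pos pi_pos]

lemma norm_pwSinc_sub_sq (l : ℂ) {x : ℝ} (hx : x ≠ l.re) :
    ‖pwSinc (x - l)‖ ^ 2 =
      Real.sin (π * (x - l.re)) ^ 2 / (π ^ 2 * ((x - l.re) ^ 2 + l.im ^ 2))
        + Real.sinh (π * l.im) ^ 2 / π ^ 2 * ((x - l.re) ^ 2 + l.im ^ 2)⁻¹ := by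
  have hw : (x : ℂ) - l ≠ 0 := fun h ↦ hx (by simpa [sub_eq_zero] using congrArg Complex.re h)
  rw [← div_eq_mul_inv, div_div, ← add_div, norm_pwSinc_sq hw, Complex.sq_norm,
    Complex.normSq_apply]
  simp only [Complex.sub_re, Complex.sub_im, Complex.ofReal_re, Complex.ofReal_im, zero_sub,
    mul_neg, Real.sinh_neg, neg_sq]
  ring

lemma integrable_inv_sq_add_sq {b : ℝ} (hb : b ≠ 0) :
    Integrable fun y : ℝ ↦ (y ^ 2 + b ^ 2)⁻¹ := by
  have h := (integrable_inv_one_add_sq.comp_div hb).const_mul (b ^ 2)⁻¹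
  refine h.congr (Filter.Eventually.of_forall fun y ↦ ?_)
  dsimp only
  field_simp
  ring

lemma integral_univ_inv_sq_add_sq {b : ℝ} (hb : b ≠ 0) :
    ∫ y : ℝ, (y ^ 2 + b ^ 2)⁻¹ = π / |b| := by
  have h (y : ℝ) : (y ^ 2 + b ^ 2)⁻¹ = (b ^ 2)⁻¹ * (1 + (y / b) ^ 2)⁻¹ := by
    field_simp
    ring
  simp_rw [h]
  rw [integral_const_mul, Measure.integral_comp_div (fun y ↦ (1 + y ^ 2)⁻¹) b,
    integral_univ_inv_one_add_sq, smul_eq_mul, ← sq_abs b]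
  field_simp

lemma sin_sq_div_sq_add_sq_le (b y : ℝ) :
    Real.sin (π * y) ^ 2 / (π ^ 2 * (y ^ 2 + b ^ 2)) ≤ 2 * (1 + y ^ 2)⁻¹ := by
  rcases eq_or_ne y 0 with rfl | hy
  · simp
  have hD : 0 < π ^ 2 * (y ^ 2 + b ^ 2) := by positivity
  rw [div_le_iff₀ hD, ← div_eq_mul_inv, div_mul_eq_mul_div, le_div_iff₀ (by positivity)]
  have h1 : Real.sin (π * y) ^ 2 ≤ (π * y) ^ 2 := sin_sq_le_sq
  have h2 : Real.sin (π * y) ^ 2 ≤ 1 := sin_sq_le_one _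
  have h3 : 1 ≤ π ^ 2 := by nlinarith [pi_gt_three]
  nlinarith [sq_nonneg b, sq_nonneg y, mul_le_mul_of_nonneg_right h2 (sq_nonneg y)]

lemma integrable_sin_sq_div_sq_add_sq (b : ℝ) :
    Integrable fun y : ℝ ↦ Real.sin (π * y) ^ 2 / (π ^ 2 * (y ^ 2 + b ^ 2)) := by
  refine (integrable_inv_one_add_sq.const_mul 2).mono'
    (Measurable.aestronglyMeasurable (by fun_prop))
    (Filter.Eventually.of_forall fun y ↦ ?_)
  rw [Real.norm_of_nonneg (by positivity)]
  exact sin_sq_div_sq_add_sq_le b y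

noncomputable def sincOscIntegral (b : ℝ) : ℝ :=
  ∫ y : ℝ, Real.sin (π * y) ^ 2 / (π ^ 2 * (y ^ 2 + b ^ 2))

lemma sincOscIntegral_nonneg (b : ℝ) : 0 ≤ sincOscIntegral b :=
  integral_nonneg fun _ ↦ by positivity

lemma sincOscIntegral_le (b : ℝ) : sincOscIntegral b ≤ 2 * π := by
  calc sincOscIntegral b ≤ ∫ y : ℝ, 2 * (1 + y ^ 2)⁻¹ :=
        integral_mono (integrable_sin_sq_div_sq_add_sq b)
          (integrable_inv_one_add_sq.const_mul 2) (sin_sq_div_sq_add_sq_le b)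
    _ = 2 * π := by rw [integral_const_mul, integral_univ_inv_one_add_sq]

lemma le_sincOscIntegral {b : ℝ} (hb : |b| ≤ 1) : 4 / (25 * π ^ 2) ≤ sincOscIntegral b := by
  have hpi := pi_pos
  have hbound : ∀ y ∈ Icc (1 / 4 : ℝ) (3 / 4),
      8 / (25 * π ^ 2) ≤ Real.sin (π * y) ^ 2 / (π ^ 2 * (y ^ 2 + b ^ 2)) := by
    rintro y ⟨hy1, hy2⟩
    have hsin : 1 / 2 ≤ Real.sin (π * y) ^ 2 := by
      have : Real.cos (2 * (π * y)) ≤ 0 :=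
        Real.cos_nonpos_of_pi_div_two_le_of_le (by nlinarith) (by nlinarith)
      rw [Real.sin_sq_eq_half_sub]
      linarith
    have hb2 : b ^ 2 ≤ 1 := by rw [← sq_abs]; nlinarith [abs_nonneg b]
    have hD : y ^ 2 + b ^ 2 ≤ 25 / 16 := by nlinarith
    rw [div_le_div_iff₀ (by positivity) (by positivity)]
    nlinarith [mul_le_mul_of_nonneg_left hsin (by positivity : (0 : ℝ) ≤ 25 * π ^ 2),
      mul_le_mul_of_nonneg_left hD (by positivity : (0 : ℝ) ≤ π ^ 2)]
  calc 4 / (25 * π ^ 2) = 8 / (25 * π ^ 2) * volume.real (Icc (1 / 4 : ℝ) (3 / 4)) := by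
        rw [Real.volume_real_Icc]; norm_num; ring
    _ ≤ ∫ y in Icc (1 / 4 : ℝ) (3 / 4),
          Real.sin (π * y) ^ 2 / (π ^ 2 * (y ^ 2 + b ^ 2)) := by
        rw [mul_comm, ← smul_eq_mul]
        exact setIntegral_ge_of_const_le measurableSet_Icc (by simp) hbound
          (integrable_sin_sq_div_sq_add_sq b).integrableOn
    _ ≤ sincOscIntegral b :=
        setIntegral_le_integral (integrable_sin_sq_div_sq_add_sq b)
          (Filter.Eventually.of_forall fun _ ↦ by positivity)

lemma sincNormSq_eq (l : ℂ) :
    sincNormSq l = sincOscIntegral l.im + Real.sinh (π * |l.im|) ^ 2 / (π * |l.im|) := by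
  set b := l.im
  have hae : (fun x : ℝ ↦ ‖pwSinc (x - l)‖ ^ 2) =ᵐ[volume] fun x ↦
      Real.sin (π * (x - l.re)) ^ 2 / (π ^ 2 * ((x - l.re) ^ 2 + b ^ 2))
        + Real.sinh (π * b) ^ 2 / π ^ 2 * ((x - l.re) ^ 2 + b ^ 2)⁻¹ := by
    filter_upwards [compl_mem_ae_iff.mpr (measure_singleton l.re)] with x hx
    exact norm_pwSinc_sub_sq l hx
  have hsinh : Real.sinh (π * b) ^ 2 = Real.sinh (π * |b|) ^ 2 := by
    rw [← sq_abs, abs_sinh, abs_mul, abs_of_pos pi_pos]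
  rw [sincNormSq, integral_congr_ae hae,
    integral_sub_right_eq_self (fun y ↦ Real.sin (π * y) ^ 2 / (π ^ 2 * (y ^ 2 + b ^ 2))
      + Real.sinh (π * b) ^ 2 / π ^ 2 * (y ^ 2 + b ^ 2)⁻¹) l.re, hsinh]
  -- at `b = 0` the Cauchy term reads `0 / 0 = 0` on both sides
  rcases eq_or_ne b 0 with hb | hb
  · simp [hb, sincOscIntegral]
  rw [integral_add (integrable_sin_sq_div_sq_add_sq b)
      ((integrable_inv_sq_add_sq hb).const_mul _), integral_const_mul,
    integral_univ_inv_sq_add_sq hb, sincOscIntegral]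
  field_simp

lemma sinh_sq_mul_one_add_le {t : ℝ} (ht : 0 ≤ t) :
    Real.sinh t ^ 2 * (1 + t) ≤ t * Real.exp (2 * t) := by
  -- `sinh t = eᵗ u / 2` with `u = 1 - e⁻²ᵗ ∈ [0, min 1 2t]`, so `u² (1 + t) ≤ 3t`.
  set u := 1 - Real.exp (-(2 * t)) with hu
  have hsinh : Real.sinh t ^ 2 = Real.exp (2 * t) * u ^ 2 / 4 := by
    have h1 : Real.exp t * Real.exp (-t) = 1 := by rw [← Real.exp_add]; simp
    have h2 : Real.exp (2 * t) = Real.exp t ^ 2 := by rw [← Real.exp_nat_mul]; norm_num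
    have h3 : Real.exp (-(2 * t)) = Real.exp (-t) ^ 2 := by rw [← Real.exp_nat_mul]; norm_num
    rw [Real.sinh_eq, hu, h2, h3]
    linear_combination (Real.exp (-t) * (2 * Real.exp t - Real.exp (-t)
      - Real.exp t * Real.exp (-t) ^ 2) / 4) * h1
  have hu0 : 0 ≤ u := by
    rw [hu, sub_nonneg]; exact Real.exp_le_one_iff.mpr (by linarith)
  have hu1 : u ≤ 1 := by rw [hu]; linarith [Real.exp_pos (-(2 * t))]
  have hu2 : u ≤ 2 * t := by rw [hu]; linarith [Real.add_one_le_exp (-(2 * t))]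
  have key : u ^ 2 * (1 + t) ≤ 4 * t := by
    nlinarith [mul_le_mul_of_nonneg_left hu2 hu0,
      mul_le_mul_of_nonneg_right (pow_le_one₀ (n := 2) hu0 hu1) ht]
  rw [hsinh]
  nlinarith [Real.exp_pos (2 * t)]

lemma exp_two_mul_div_sixteen_le_sinh_sq {t : ℝ} (ht : 1 ≤ t) :
    Real.exp (2 * t) / 16 ≤ Real.sinh t ^ 2 := by
  have hsinh : Real.exp t / 4 ≤ Real.sinh t := by
    rw [Real.sinh_eq]
    have h2 : 2 ≤ Real.exp t * Real.exp t := by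
      rw [← Real.exp_add]; linarith [Real.add_one_le_exp (t + t)]
    have h1 : Real.exp t * Real.exp (-t) = 1 := by rw [← Real.exp_add]; simp
    nlinarith [Real.exp_pos (-t), Real.exp_pos t]
  have hexp : Real.exp (2 * t) = Real.exp t ^ 2 := by rw [← Real.exp_nat_mul]; norm_num
  rw [hexp]
  nlinarith [Real.exp_pos t]

lemma one_add_le_exp_two_pi_mul {B : ℝ} (hB : 0 ≤ B) : 1 + B ≤ Real.exp (2 * π * B) := by
  nlinarith [Real.add_one_le_exp (2 * π * B), pi_gt_three]

lemma sincNormSq_le (l : ℂ) :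
    sincNormSq l ≤ (2 * π + 1) * (Real.exp (2 * π * |l.im|) / (1 + |l.im|)) := by
  set B := |l.im|
  have hB : 0 ≤ B := abs_nonneg _
  have hosc : sincOscIntegral l.im ≤ 2 * π * (Real.exp (2 * π * B) / (1 + B)) := by
    refine (sincOscIntegral_le l.im).trans (le_mul_of_one_le_right (by positivity) ?_)
    exact (one_le_div (by positivity)).mpr (one_add_le_exp_two_pi_mul hB)
  have hsinh : Real.sinh (π * B) ^ 2 / (π * B) ≤ Real.exp (2 * π * B) / (1 + B) := by
    rcases hB.eq_or_lt with hB0 | hB0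
    · simp [← hB0]
    rw [div_le_div_iff₀ (by positivity) (by positivity), mul_assoc, mul_comm (Real.exp _)]
    calc Real.sinh (π * B) ^ 2 * (1 + B) ≤ Real.sinh (π * B) ^ 2 * (1 + π * B) := by
          gcongr; nlinarith [pi_gt_three]
      _ ≤ π * B * Real.exp (2 * (π * B)) := sinh_sq_mul_one_add_le (by positivity)
  rw [sincNormSq_eq]
  linarith

lemma exists_pos_mul_le_sincNormSq :
    ∃ c > 0, ∀ l : ℂ, c * (Real.exp (2 * π * |l.im|) / (1 + |l.im|)) ≤ sincNormSq l := by
  refine ⟨min (4 / (25 * π ^ 2) * Real.exp (-(2 * π))) (1 / (16 * π)), by positivity,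
    fun l ↦ ?_⟩
  set B := |l.im|
  have hB : 0 ≤ B := abs_nonneg _
  have hsinh : 0 ≤ Real.sinh (π * B) ^ 2 / (π * B) := by positivity
  rw [sincNormSq_eq]
  rcases le_total B 1 with hB1 | hB1
  · have hgrowth : Real.exp (2 * π * B) / (1 + B) ≤ Real.exp (2 * π) :=
      (div_le_self (Real.exp_pos _).le (by linarith)).trans
        (Real.exp_le_exp.mpr (by nlinarith [pi_pos]))
    calc _ ≤ 4 / (25 * π ^ 2) * Real.exp (-(2 * π)) * Real.exp (2 * π) :=
          mul_le_mul (min_le_left _ _) hgrowth (by positivity) (by positivity)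
      _ = 4 / (25 * π ^ 2) := by rw [mul_assoc, ← Real.exp_add]; simp
      _ ≤ _ := by linarith [le_sincOscIntegral hB1]
  · have h16 := exp_two_mul_div_sixteen_le_sinh_sq (t := π * B) (by nlinarith [pi_gt_three])
    calc _ ≤ 1 / (16 * π) * (Real.exp (2 * π * B) / (1 + B)) :=
          mul_le_mul_of_nonneg_right (min_le_right _ _) (by positivity)
      _ = Real.exp (2 * π * B) / (16 * (π * (1 + B))) := by
          rw [div_mul_div_comm, one_mul, mul_assoc 16 π]
      _ ≤ Real.exp (2 * π * B) / 16 / (π * B) := by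
          rw [div_div]
          gcongr
          linarith
      _ ≤ Real.sinh (π * B) ^ 2 / (π * B) := by
          gcongr; rwa [mul_assoc]
      _ ≤ _ := by linarith [sincOscIntegral_nonneg l.im]

lemma exists_two_sided_bounds_and_inv {α : Type*} {S g : α → ℝ} (hg : ∀ x, 0 < g x)
    {c C : ℝ} (hc : 0 < c) (hC : 0 < C) (hlow : ∀ x, c * g x ≤ S x)
    (hup : ∀ x, S x ≤ C * g x) :
    ∃ c' C' : ℝ, 0 < c' ∧ 0 < C' ∧ ∀ x, (c' * g x ≤ S x ∧ S x ≤ C' * g x) ∧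
      (c' * (g x)⁻¹ ≤ (S x)⁻¹ ∧ (S x)⁻¹ ≤ C' * (g x)⁻¹) := by
  refine ⟨min c C⁻¹, max C c⁻¹, by positivity, by positivity,
    fun x ↦ ⟨⟨?_, ?_⟩, ?_, ?_⟩⟩
  · exact (mul_le_mul_of_nonneg_right (min_le_left _ _) (hg x).le).trans (hlow x)
  · exact (hup x).trans (mul_le_mul_of_nonneg_right (le_max_left _ _) (hg x).le)
  · calc min c C⁻¹ * (g x)⁻¹ ≤ C⁻¹ * (g x)⁻¹ :=
          mul_le_mul_of_nonneg_right (min_le_right _ _) (inv_pos.mpr (hg x)).le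
      _ = (C * g x)⁻¹ := (mul_inv _ _).symm
      _ ≤ (S x)⁻¹ := inv_anti₀ (by nlinarith [hlow x, hg x]) (hup x)
  · calc (S x)⁻¹ ≤ (c * g x)⁻¹ := inv_anti₀ (by nlinarith [hg x]) (hlow x)
      _ = c⁻¹ * (g x)⁻¹ := mul_inv _ _
      _ ≤ max C c⁻¹ * (g x)⁻¹ :=
          mul_le_mul_of_nonneg_right (le_max_right _ _) (inv_pos.mpr (hg x)).le

lemma pwC_sq (l : ℂ) : pwC l ^ 2 = (sincNormSq l)⁻¹ := by
  have hS : 0 ≤ sincNormSq l := integral_nonneg fun _ ↦ by positivity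
  rw [pwC, div_pow, one_pow, Real.sq_sqrt hS, one_div]

/-- Asymptotics of the squared `L²(ℝ)`-norm of the Paley–Wiener reproducing kernel:
`∫_ℝ |sinc(π(x-λ))|² dx ≍ e^{2π|Im λ|}/(1+|Im λ|)`; equivalently the normalization
constant satisfies `c_λ² ≍ (1+|Im λ|) e^{-2π|Im λ|}`. -/
theorem pw_kernel_norm_asymptotics :
    ∃ c C : ℝ, 0 < c ∧ 0 < C ∧ ∀ l : ℂ,
      (c * Real.exp (2 * Real.pi * |l.im|) / (1 + |l.im|) ≤ sincNormSq l ∧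
        sincNormSq l ≤ C * Real.exp (2 * Real.pi * |l.im|) / (1 + |l.im|)) ∧
      (c * ((1 + |l.im|) * Real.exp (-(2 * Real.pi * |l.im|))) ≤ pwC l ^ 2 ∧
        pwC l ^ 2 ≤ C * ((1 + |l.im|) * Real.exp (-(2 * Real.pi * |l.im|)))) := by
  obtain ⟨c, hc, hlow⟩ := exists_pos_mul_le_sincNormSq
  obtain ⟨c', C', hc', hC', hbounds⟩ := exists_two_sided_bounds_and_inv
    (g := fun l : ℂ ↦ Real.exp (2 * π * |l.im|) / (1 + |l.im|)) (fun _ ↦ by positivity)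
    hc (by positivity) hlow sincNormSq_le
  refine ⟨c', C', hc', hC', fun l ↦ ?_⟩
  have hgrowth_inv : (1 + |l.im|) * Real.exp (-(2 * π * |l.im|))
      = (Real.exp (2 * π * |l.im|) / (1 + |l.im|))⁻¹ := by
    rw [inv_div, Real.exp_neg, div_eq_mul_inv]
  simpa only [mul_div_assoc, pwC_sq, hgrowth_inv] using hbounds l
end

section
/- Let x_n = n+1/8 for n even and x_n = n−1/8 for n odd, n ∈ ℤ∖{0}. There exists δ>0 such that for every λ ∈ ℂ with |Im λ| ≤ 1 there exists n ∈ ℤ∖{0} with |sin(π(x_n−λ))/(π(x_n−λ))| ≥ δ; one may take x_n to be a point of the sequence closest to λ. -/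
open MeasureTheory Complex Set

/-!
Since `|sin(π x)|` is `1`-periodic in `x`, the points `x_n` with `n` even all give
`|sin(π(x_n - r))| = |sin(πr - π/8)|` and those with `n` odd give `|sin(πr + π/8)|`.
The identity `sin²(θ - β) + sin²(θ + β) = 2(sin²θ cos²β + cos²θ sin²β) ≥ sin²(2β)/2`
makes one of these at least `sin(π/4)/2 = √2/4`, for a nonzero `n` of the right parity
within distance `3` of `r = Re λ`. As `|Im λ| ≤ 1`, such `w = x_n - λ` has `|w| ≤ 4`, and
`|sinc w| ≥ |sin(π Re w)| / (π|w|) ≥ √2/(16π)`, because `|sin z| ≥ |sin(Re z)|`.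
-/

open Real in
theorem Real.sin_two_mul_sq_div_two_le (θ β : ℝ) :
    sin (2 * β) ^ 2 / 2 ≤ sin (θ - β) ^ 2 + sin (θ + β) ^ 2 := by
  rw [sin_two_mul, sin_sub, sin_add]
  nlinarith [sin_sq_add_cos_sq θ, sin_sq_add_cos_sq β,
    mul_nonneg (sq_nonneg (sin θ)) (sq_nonneg (cos β ^ 2)),
    mul_nonneg (sq_nonneg (cos θ)) (sq_nonneg (sin β ^ 2))]

open Real in
theorem Real.abs_sin_two_mul_div_two_le_abs_sin_sub_or_add (θ β : ℝ) :
    |sin (2 * β)| / 2 ≤ |sin (θ - β)| ∨ |sin (2 * β)| / 2 ≤ |sin (θ + β)| := by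
  by_contra! h
  have hsub := pow_lt_pow_left₀ h.1 (abs_nonneg _) two_ne_zero
  have hadd := pow_lt_pow_left₀ h.2 (abs_nonneg _) two_ne_zero
  simp only [sq_abs, div_pow] at hsub hadd
  linarith [sin_two_mul_sq_div_two_le θ β]

theorem Complex.abs_sin_re_le_norm_sin (z : ℂ) : |Real.sin z.re| ≤ ‖Complex.sin z‖ := by
  have hre : (Complex.sin z).re = Real.sin z.re * Real.cosh z.im := by
    rw [Complex.sin_eq]; simp [← ofReal_sin, ← ofReal_cosh, ← ofReal_cos, ← ofReal_sinh]
  calc |Real.sin z.re| ≤ |Real.sin z.re| * Real.cosh z.im :=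
        le_mul_of_one_le_right (abs_nonneg _) (Real.one_le_cosh _)
    _ = |(Complex.sin z).re| := by rw [hre, abs_mul, abs_of_pos (Real.cosh_pos _)]
    _ ≤ ‖Complex.sin z‖ := abs_re_le_norm _

theorem abs_sin_pi_mul_re_div_le_norm_pwSinc (w : ℂ) :
    |Real.sin (Real.pi * w.re)| / (Real.pi * ‖w‖) ≤ ‖pwSinc w‖ := by
  by_cases hw : w = 0
  · simp [hw, pwSinc]
  rw [pwSinc, if_neg hw, norm_div, norm_mul, norm_real, Real.norm_of_nonneg Real.pi_pos.le]
  gcongr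
  simpa using Complex.abs_sin_re_le_norm_sin (Real.pi * w)

theorem Int.exists_ne_zero_abs_sub_le_one (t : ℝ) : ∃ k : ℤ, k ≠ 0 ∧ |(k : ℝ) - t| ≤ 1 := by
  rcases lt_or_ge t 0 with ht | ht
  · refine ⟨⌊t⌋, (Int.floor_lt.mpr (by simpa using ht)).ne, abs_le.mpr ⟨?_, ?_⟩⟩ <;>
      linarith [Int.floor_le t, Int.lt_floor_add_one t]
  · refine ⟨⌊t⌋ + 1, by positivity, abs_le.mpr ⟨?_, ?_⟩⟩ <;> push_cast <;>
      linarith [Int.floor_le t, Int.lt_floor_add_one t]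

theorem exists_xseq_abs_sub_le_and_abs_sin_ge (r : ℝ) :
    ∃ n : ℤ, n ≠ 0 ∧ |xseq n - r| ≤ 3 ∧ √2 / 4 ≤ |Real.sin (Real.pi * (xseq n - r))| := by
  have hβ : |Real.sin (2 * (Real.pi / 8))| / 2 = √2 / 4 := by
    rw [show 2 * (Real.pi / 8) = Real.pi / 4 by ring, Real.sin_pi_div_four,
      abs_of_pos (by positivity)]
    ring
  have hsin (n : ℤ) (a : ℝ) :
      |Real.sin (Real.pi * (n + a - r))| = |Real.sin (Real.pi * r - Real.pi * a)| := by
    rw [show Real.pi * (n + a - r) = n * Real.pi - (Real.pi * r - Real.pi * a) by ring,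
      Real.sin_int_mul_pi_sub, abs_neg, abs_mul, abs_neg_one_zpow, one_mul]
  have key := Real.abs_sin_two_mul_div_two_le_abs_sin_sub_or_add (Real.pi * r) (Real.pi / 8)
  rw [hβ] at key
  rcases key with h | h
  · obtain ⟨k, hk0, hk⟩ := Int.exists_ne_zero_abs_sub_le_one (r / 2)
    have hx : xseq (2 * k) = ((2 * k : ℤ) : ℝ) + 1 / 8 := if_pos (even_two_mul k)
    refine ⟨2 * k, by omega, ?_, ?_⟩
    · rw [hx]; rw [abs_le] at hk ⊢; push_cast; constructor <;> linarith
    · rw [hx, hsin]; convert h using 3; ring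
  · obtain ⟨k, -, hk⟩ := Int.exists_ne_zero_abs_sub_le_one ((r - 1) / 2)
    have hx : xseq (2 * k + 1) = ((2 * k + 1 : ℤ) : ℝ) + -(1 / 8) := by
      rw [xseq, if_neg (Int.not_even_two_mul_add_one k)]; ring
    refine ⟨2 * k + 1, by omega, ?_, ?_⟩
    · rw [hx]; rw [abs_le] at hk ⊢; push_cast; constructor <;> linarith
    · rw [hx, hsin]; convert h using 3; ring

/-- Near the real axis, some point of the sequence (one may take a closest one) sees the
sinc kernel bounded below: there is `δ > 0` such that for every `λ` with `|Im λ| ≤ 1`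
there is `n ≠ 0` with `|sinc(π(x_n-λ))| ≥ δ`. -/
theorem pw_sinc_lower_bound_near_axis :
    ∃ δ > (0:ℝ), ∀ l : ℂ, |l.im| ≤ 1 →
      ∃ n : ℤ, n ≠ 0 ∧ δ ≤ ‖pwSinc ((xseq n : ℂ) - l)‖ := by
  refine ⟨√2 / 4 / (Real.pi * 4), by positivity, fun l hl => ?_⟩
  obtain ⟨n, hn0, hnear, hsin⟩ := exists_xseq_abs_sub_le_and_abs_sin_ge l.re
  refine ⟨n, hn0, le_trans ?_ (abs_sin_pi_mul_re_div_le_norm_pwSinc _)⟩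
  set w : ℂ := (xseq n : ℂ) - l
  have hw_re : w.re = xseq n - l.re := by simp [w]
  have hw_norm : ‖w‖ ≤ 4 := by
    calc ‖w‖ ≤ |w.re| + |w.im| := norm_le_abs_re_add_abs_im w
      _ ≤ 3 + 1 := by simp only [w, sub_im, ofReal_im, zero_sub, abs_neg, hw_re]; gcongr
      _ = 4 := by norm_num
  have hw_pos : 0 < ‖w‖ := by
    refine norm_pos_iff.mpr fun hw => ?_
    rw [← hw_re, hw, zero_re, mul_zero, Real.sin_zero, abs_zero] at hsin
    linarith [show 0 < √2 / 4 by positivity]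
  rw [hw_re]
  gcongr
end
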